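/- arXiv:1711.02032 — 3 statements merged into one kernel-verified Lean document; each statement's English description precedes it below -/
import Mathlib

section
/- Let c : V → ℕ be a proper coloring of a finite graph G minimizing the sum ∑_{v ∈ V} c(v), and for each color p let μ(p) = |{v ∈ V : c(v) = p}|. Then for all colors p ≤ q we have μ(p) ≥ μ(q). -/
theorem stmt0 {V : Type} [Fintype V] [DecidableEq V] (G : SimpleGraph V)
    (c : V → ℕ)
    (hpos : ∀ v, 1 ≤ c v)
    (hproper : ∀ u v, G.Adj u v → c u ≠ c v)
    (hopt : ∀ c' : V → ℕ, (∀ v, 1 ≤ c' v) → (∀ u v, G.Adj u v → c' u ≠ c' v) →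
      ∑ v, c v ≤ ∑ v, c' v)
    (μ : ℕ → ℕ) (hμ : ∀ p, μ p = (Finset.univ.filter (fun v => c v = p)).card)
    (p q : ℕ) (hp : 1 ≤ p) (hpq : p ≤ q) : μ q ≤ μ p := by
  rcases eq_or_lt_of_le hpq with rfl | hlt
  · exact le_refl _
  -- swap coloring
  set c' : V → ℕ := fun v => if c v = p then q else if c v = q then p else c v with hc'
  have hpos' : ∀ v, 1 ≤ c' v := by
    intro v
    simp only [hc']
    split_ifs <;> [exact hp.trans hpq; exact hp; exact hpos v]
  have hinj : ∀ u v, c' u = c' v → c u = c v := by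
    intro u v h
    simp only [hc'] at h
    split_ifs at h <;> omega
  have hproper' : ∀ u v, G.Adj u v → c' u ≠ c' v := by
    intro u v hadj h
    exact hproper u v hadj (hinj u v h)
  have hle := hopt c' hpos' hproper'
  have hpt : ∀ v, c' v + (if c v = p then p else 0) + (if c v = q then q else 0)
      = c v + (if c v = p then q else 0) + (if c v = q then p else 0) := by
    intro v
    simp only [hc']
    split_ifs <;> omega
  have hsum : ∑ v, c' v + p * μ p + q * μ q = ∑ v, c v + q * μ p + p * μ q := by
    have h1 : ∀ (r s : ℕ), ∑ v : V, (if c v = r then s else 0) = s * μ r := by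
      intro r s
      rw [hμ, Finset.sum_ite, Finset.sum_const, Finset.sum_const_zero, add_zero, smul_eq_mul, mul_comm]
    calc ∑ v, c' v + p * μ p + q * μ q
        = ∑ v : V, (c' v + (if c v = p then p else 0) + (if c v = q then q else 0)) := by
          rw [Finset.sum_add_distrib, Finset.sum_add_distrib, h1 p p, h1 q q]
      _ = ∑ v : V, (c v + (if c v = p then q else 0) + (if c v = q then p else 0)) := by
          exact Finset.sum_congr rfl fun v _ => hpt v
      _ = ∑ v, c v + q * μ p + p * μ q := by
          rw [Finset.sum_add_distrib, Finset.sum_add_distrib, h1 p q, h1 q p]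
  -- conclude
  nlinarith [hle, hsum, hlt]
end

section
/- Every nonempty subset S of ℤ^n has only finitely many minimal elements with respect to the conformal order ⊑, where x ⊑ y iff for all i, x_i·y_i ≥ 0 and |x_i| ≤ |y_i|. -/
/-!
Splitting every coordinate into its positive and negative part embeds `ℤ^n` into `ℕ^(2n)` so
that componentwise `≤` there implies `⊑`. The minimal elements of `S` map to an antichain of
`ℕ^(2n)`, which is finite by Dickson's lemma.
-/

/-- The conformal order on `ℤ^n`: `x ⊑ y` iff `x` and `y` lie in the same
orthant and `x` is componentwise dominated by `y` in absolute value. -/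
def ConformalLE (n : ℕ) (x y : Fin n → ℤ) : Prop :=
  ∀ i, 0 ≤ x i * y i ∧ |x i| ≤ |y i|

theorem Function.Injective.finite_minimals_of_le_imp {α β : Type*} [Preorder β]
    [WellQuasiOrderedLE β] {f : α → β} (hf : Function.Injective f) (r : α → α → Prop)
    (hr : ∀ x y, f x ≤ f y → r x y) (S : Set α) :
    {x ∈ S | ∀ y ∈ S, r y x → y = x}.Finite := by
  have hanti : IsAntichain (· ≤ ·) (f '' {x ∈ S | ∀ y ∈ S, r y x → y = x}) := by
    rintro _ ⟨y, hy, rfl⟩ _ ⟨x, hx, rfl⟩ hne hyx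
    exact hne (congrArg f (hx.2 y hy.1 (hr y x hyx)))
  exact Set.Finite.of_finite_image
    (hanti.finite_of_partiallyWellOrderedOn (Set.isPWO_of_wellQuasiOrderedLE _)) hf.injOn

theorem Int.mul_nonneg_and_abs_le_of_toNat_le {a b : ℤ} (hpos : a.toNat ≤ b.toNat)
    (hneg : (-a).toNat ≤ (-b).toNat) : 0 ≤ a * b ∧ |a| ≤ |b| := by
  rw [mul_nonneg_iff]
  rcases abs_cases a with ⟨ha, _⟩ | ⟨ha, _⟩ <;> rcases abs_cases b with ⟨hb, _⟩ | ⟨hb, _⟩ <;>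
    rw [ha, hb] <;> omega

def posNegParts {ι : Type*} (x : ι → ℤ) : ι × Bool → ℕ :=
  fun p => bif p.2 then (x p.1).toNat else (-x p.1).toNat

theorem posNegParts_injective {ι : Type*} : Function.Injective (posNegParts (ι := ι)) := by
  intro x y hxy
  funext i
  have hpos := congrFun hxy (i, true)
  have hneg := congrFun hxy (i, false)
  simp only [posNegParts, cond_true, cond_false] at hpos hneg
  omega

theorem conformalLE_of_posNegParts_le {n : ℕ} {x y : Fin n → ℤ}
    (h : posNegParts x ≤ posNegParts y) : ConformalLE n x y :=
  fun i => Int.mul_nonneg_and_abs_le_of_toNat_le (h (i, true)) (h (i, false))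

theorem stmt5_general (n : ℕ) (S : Set (Fin n → ℤ)) :
    {x ∈ S | ∀ y ∈ S, ConformalLE n y x → y = x}.Finite :=
  posNegParts_injective.finite_minimals_of_le_imp (ConformalLE n)
    (fun _ _ => conformalLE_of_posNegParts_le) S

theorem stmt5 (n : ℕ) (S : Set (Fin n → ℤ)) (hS : S.Nonempty) :
    {x ∈ S | ∀ y ∈ S, ConformalLE n y x → y = x}.Finite :=
  stmt5_general n S
end

section
/- Let G be a graph whose twin-equivalence has k classes, and suppose class V_i is an independent set. If c is a proper coloring of G minimizing ∑_v c(v) and two distinct colors α < β are both used on vertices of V_i, then recoloring all vertices of color β in V_i to color α yields a proper coloring with strictly smaller color sum, a contradiction; hence in any optimal sum coloring every independent type receives a single color. -/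
def Twins {V : Type} (G : SimpleGraph V) (u v : V) : Prop :=
  G.neighborSet u \ {v} = G.neighborSet v \ {u}

theorem stmt16 {V : Type} [Fintype V] (G : SimpleGraph V)
    (c : V → ℕ) (hpos : ∀ v, 1 ≤ c v)
    (hproper : ∀ u v, G.Adj u v → c u ≠ c v)
    (hopt : ∀ c' : V → ℕ, (∀ v, 1 ≤ c' v) → (∀ u v, G.Adj u v → c' u ≠ c' v) →
      ∑ v, c v ≤ ∑ v, c' v)
    (S : Set V) (htwin : ∀ u ∈ S, ∀ v ∈ S, Twins G u v)
    (hindep : ∀ u ∈ S, ∀ v ∈ S, ¬ G.Adj u v) :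
    ∀ u ∈ S, ∀ v ∈ S, c u = c v := by
  classical
  intro u hu v hv
  by_contra hne
  wlog hlt : c v < c u generalizing u v
  · exact this v hv u hu (Ne.symm hne)
      (lt_of_le_of_ne (not_lt.mp hlt) hne)
  -- neighbor sets of u and v coincide
  have hnb : G.neighborSet u = G.neighborSet v := by
    have ht := htwin u hu v hv
    unfold Twins at ht
    have hvu : v ∉ G.neighborSet u := fun h => hindep u hu v hv h
    have huv : u ∉ G.neighborSet v := fun h => hindep v hv u hu h
    ext w
    by_cases hw : w = v
    · subst hw
      constructor
      · exact fun h => absurd h hvu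
      · intro h; exact absurd (G.adj_symm h) (G.irrefl)
    · by_cases hw' : w = u
      · subst hw'
        constructor
        · intro h; exact absurd h (G.irrefl)
        · exact fun h => absurd h huv
      · constructor
        · intro h
          have : w ∈ G.neighborSet u \ {v} := ⟨h, hw⟩
          rw [ht] at this
          exact this.1
        · intro h
          have : w ∈ G.neighborSet v \ {u} := ⟨h, hw'⟩
          rw [← ht] at this
          exact this.1
  set c' : V → ℕ := Function.update c u (c v) with hc'
  have hcu : c' u = c v := Function.update_self u (c v) c
  have hco : ∀ w, w ≠ u → c' w = c w := fun w hw => Function.update_of_ne hw _ _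
  have hpos' : ∀ w, 1 ≤ c' w := by
    intro w
    by_cases hw : w = u
    · subst hw; rw [hcu]; exact hpos v
    · rw [hco w hw]; exact hpos w
  have hproper' : ∀ a b, G.Adj a b → c' a ≠ c' b := by
    intro a b hab
    by_cases ha : a = u
    · have hb : b ≠ u := fun h => by rw [ha, h] at hab; exact G.irrefl hab
      rw [ha, hcu, hco b hb]
      have : b ∈ G.neighborSet v := hnb ▸ (ha ▸ hab)
      exact hproper v b this
    · by_cases hb : b = u
      · rw [hb, hcu, hco a ha]
        have : a ∈ G.neighborSet v := hnb ▸ (G.adj_symm (hb ▸ hab))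
        exact fun h => hproper v a this h.symm
      · rw [hco a ha, hco b hb]; exact hproper a b hab
  have hsum : ∑ w, c' w < ∑ w, c w := by
    apply Finset.sum_lt_sum
    · intro i _
      by_cases hi : i = u
      · subst hi; rw [hcu]; exact le_of_lt hlt
      · rw [hco i hi]
    · exact ⟨u, Finset.mem_univ u, by rw [hcu]; exact hlt⟩
  exact absurd (hopt c' hpos' hproper') (not_le.mpr hsum)
end
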